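/- arXiv:1212.3736 — 2 statements merged into one kernel-verified Lean document; each statement's English description precedes it below -/
import Mathlib

section
/- Positive semidefinite bipartite relaxation is exact: let Q be a symmetric positive semidefinite n×n real matrix and c ∈ ℝ^n. Then the maximum over x, y ∈ {0,1}^n of (xᵀQy + c·x + c·y) equals the maximum over x ∈ {0,1}^n of (xᵀQx + 2c·x); in particular, the bipartite maximum is attained at some pair with x = y. -/
/-- The bipartite objective `xᵀQy + c·x + c·y`. -/
noncomputable def bipObj {n : ℕ} (Q : Matrix (Fin n) (Fin n) ℝ) (c : Fin n → ℝ)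
    (x y : Fin n → ℝ) : ℝ :=
  (∑ i, ∑ j, Q i j * x i * y j) + (∑ i, c i * x i) + (∑ j, c j * y j)

/-!
Positive semidefiniteness of `Q` applied to `x - y`, together with the symmetry of `Q`, gives
`2 xᵀQy ≤ xᵀQx + yᵀQy`. Hence the bipartite value of `(x, y)` is at most the mean, so at most the
maximum, of the diagonal values at `(x, x)` and `(y, y)`. Since `{0,1}ⁿ` is finite, a maximiser of
the diagonal value then maximises the bipartite objective too.
-/

open Finset

section QuadraticForm

variable {ι : Type*} [Fintype ι] (Q : Matrix ι ι ℝ)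

lemma sum_sum_mul_sub_mul_sub (x y : ι → ℝ) :
    ∑ i, ∑ j, Q i j * (x - y) i * (x - y) j =
      (∑ i, ∑ j, Q i j * x i * x j) - (∑ i, ∑ j, Q i j * x i * y j)
        - (∑ i, ∑ j, Q i j * y i * x j) + ∑ i, ∑ j, Q i j * y i * y j := by
  simp only [Pi.sub_apply, mul_sub, sub_mul, sum_sub_distrib]
  ring

lemma sum_sum_mul_swap_of_symm (hsym : ∀ i j, Q i j = Q j i) (x y : ι → ℝ) :
    ∑ i, ∑ j, Q i j * y i * x j = ∑ i, ∑ j, Q i j * x i * y j := by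
  rw [sum_comm]
  exact sum_congr rfl fun j _ => sum_congr rfl fun i _ => by rw [hsym]; ring

lemma two_mul_sum_sum_le_of_psd (hsym : ∀ i j, Q i j = Q j i)
    (hpsd : ∀ z : ι → ℝ, 0 ≤ ∑ i, ∑ j, Q i j * z i * z j) (x y : ι → ℝ) :
    2 * ∑ i, ∑ j, Q i j * x i * y j ≤
      (∑ i, ∑ j, Q i j * x i * x j) + ∑ i, ∑ j, Q i j * y i * y j := by
  have h := hpsd (x - y)
  rw [sum_sum_mul_sub_mul_sub, sum_sum_mul_swap_of_symm Q hsym x y] at h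
  linarith

end QuadraticForm

lemma bipObj_self {n : ℕ} (Q : Matrix (Fin n) (Fin n) ℝ) (c : Fin n → ℝ) (x : Fin n → ℝ) :
    bipObj Q c x x = (∑ i, ∑ j, Q i j * x i * x j) + 2 * ∑ i, c i * x i := by
  rw [bipObj]
  ring

lemma bipObj_le_max_bipObj_self {n : ℕ} {Q : Matrix (Fin n) (Fin n) ℝ} (c : Fin n → ℝ)
    (hsym : ∀ i j, Q i j = Q j i) (hpsd : ∀ z : Fin n → ℝ, 0 ≤ ∑ i, ∑ j, Q i j * z i * z j)
    (x y : Fin n → ℝ) :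
    bipObj Q c x y ≤ max (bipObj Q c x x) (bipObj Q c y y) := by
  have h := two_mul_sum_sum_le_of_psd Q hsym hpsd x y
  have hx := le_max_left (bipObj Q c x x) (bipObj Q c y y)
  have hy := le_max_right (bipObj Q c x x) (bipObj Q c y y)
  simp only [bipObj] at *
  linarith

lemma Set.Finite.exists_forall_le_diag {α β : Type*} [LinearOrder β] {s : Set α}
    (hs : s.Finite) (hne : s.Nonempty) {f : α → α → β}
    (hf : ∀ x ∈ s, ∀ y ∈ s, f x y ≤ max (f x x) (f y y)) :
    ∃ z ∈ s, ∀ x ∈ s, ∀ y ∈ s, f x y ≤ f z z := by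
  obtain ⟨z, hz, hmax⟩ := Set.exists_max_image s (fun x => f x x) hs hne
  exact ⟨z, hz, fun x hx y hy => (hf x hx y hy).trans (max_le (hmax x hx) (hmax y hy))⟩

lemma finite_setOf_forall_eq_zero_or_eq_one (ι : Type*) [Finite ι] :
    {x : ι → ℝ | ∀ i, x i = 0 ∨ x i = 1}.Finite := by
  convert Set.Finite.pi (t := fun _ : ι => ({0, 1} : Set ℝ)) fun _ => Set.toFinite _
  ext x
  simp

/-- Positive semidefinite bipartite relaxation is exact: for a symmetric positive
semidefinite `Q` and any `c`, the maximum over binary `x, y` of `xᵀQy + c·x + c·y`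
equals the maximum over binary `x` of `xᵀQx + 2c·x`; in particular the bipartite
maximum is attained at a pair with `x = y`. -/
theorem stmt_9 (n : ℕ) (Q : Matrix (Fin n) (Fin n) ℝ) (c : Fin n → ℝ)
    (hsym : ∀ i j, Q i j = Q j i)
    (hpsd : ∀ z : Fin n → ℝ, 0 ≤ ∑ i, ∑ j, Q i j * z i * z j) :
    (sSup {v : ℝ | ∃ x y : Fin n → ℝ,
        (∀ i, x i = 0 ∨ x i = 1) ∧ (∀ j, y j = 0 ∨ y j = 1) ∧ v = bipObj Q c x y} =
      sSup {v : ℝ | ∃ x : Fin n → ℝ, (∀ i, x i = 0 ∨ x i = 1) ∧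
        v = (∑ i, ∑ j, Q i j * x i * x j) + 2 * ∑ i, c i * x i}) ∧
    (∃ x : Fin n → ℝ, (∀ i, x i = 0 ∨ x i = 1) ∧
      IsGreatest {v : ℝ | ∃ x' y' : Fin n → ℝ,
          (∀ i, x' i = 0 ∨ x' i = 1) ∧ (∀ j, y' j = 0 ∨ y' j = 1) ∧
          v = bipObj Q c x' y'}
        (bipObj Q c x x)) := by
  obtain ⟨z, hz, hmax⟩ := (finite_setOf_forall_eq_zero_or_eq_one (Fin n)).exists_forall_le_diag
    ⟨0, fun _ => Or.inl rfl⟩ fun x _ y _ => bipObj_le_max_bipObj_self c hsym hpsd x y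
  have hbip : IsGreatest {v : ℝ | ∃ x y : Fin n → ℝ,
      (∀ i, x i = 0 ∨ x i = 1) ∧ (∀ j, y j = 0 ∨ y j = 1) ∧ v = bipObj Q c x y}
      (bipObj Q c z z) :=
    ⟨⟨z, z, hz, hz, rfl⟩, by rintro _ ⟨x, y, hx, hy, rfl⟩; exact hmax x hx y hy⟩
  have hdiag : IsGreatest {v : ℝ | ∃ x : Fin n → ℝ, (∀ i, x i = 0 ∨ x i = 1) ∧
      v = (∑ i, ∑ j, Q i j * x i * x j) + 2 * ∑ i, c i * x i} (bipObj Q c z z) :=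
    ⟨⟨z, hz, bipObj_self Q c z⟩, by
      rintro _ ⟨x, hx, rfl⟩
      rw [← bipObj_self]
      exact hmax x hx x hx⟩
  exact ⟨by rw [hbip.csSup_eq, hdiag.csSup_eq], z, hz, hbip⟩
end

section
/- Penalty reduction of QP01 to BQP01: let Q' be an n×n real matrix and c' ∈ ℝ^n, and let M > 2(Σ_{i,j}|q'_{ij}| + Σ_i|c'_i|). Then the maximum over x, y ∈ {0,1}^n of xᵀ(Q' + 2MI)y + ((1/2)c' − M·𝟙)·x + ((1/2)c' − M·𝟙)·y equals the maximum over x ∈ {0,1}^n of xᵀQ'x + c'·x, and every maximizing pair (x,y) of the former satisfies x = y. -/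
/-!
For binary `x, y` we have `2 x_i y_i - x_i - y_i = -(x_i - y_i)²`, so the penalized objective is
`xᵀQ'y + c'·(x + y)/2 - M‖x - y‖²`. On the diagonal it is the QP01 objective, and the first two
terms are bounded in absolute value by `K = Σ|q'_{ij}| + Σ|c'_i|`. Off the diagonal the penalty
is at least `M > 2K`, so `penObj x y ≤ K - M < -K ≤ penObj x x`: every off-diagonal pair is beaten
by a diagonal one, which gives both the equality of the maxima and `x = y` for maximizers.
-/

/-- The penalized bipartite objective
`xᵀ(Q' + 2MI)y + ((1/2)c' − M𝟙)·x + ((1/2)c' − M𝟙)·y`. -/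
noncomputable def penObj {n : ℕ} (Q' : Matrix (Fin n) (Fin n) ℝ) (c' : Fin n → ℝ)
    (M : ℝ) (x y : Fin n → ℝ) : ℝ :=
  (∑ i, ∑ j, (Q' i j + 2 * M * (if i = j then 1 else 0)) * x i * y j)
    + (∑ i, ((1 / 2) * c' i - M) * x i) + (∑ i, ((1 / 2) * c' i - M) * y i)

open Finset

section Binary

variable {ι : Type*}

def IsBinary (x : ι → ℝ) : Prop := ∀ i, x i = 0 ∨ x i = 1

theorem IsBinary.abs_le_one {x : ι → ℝ} (hx : IsBinary x) (i : ι) : |x i| ≤ 1 := by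
  rcases hx i with h | h <;> simp [h]

theorem IsBinary.sq_eq {x : ι → ℝ} (hx : IsBinary x) (i : ι) : x i ^ 2 = x i := by
  rcases hx i with h | h <;> simp [h]

theorem finite_setOf_isBinary [Finite ι] : {x : ι → ℝ | IsBinary x}.Finite := by
  have h : {x : ι → ℝ | IsBinary x} = Set.univ.pi fun _ => {0, 1} := by
    ext x; simp [IsBinary]
  rw [h]
  exact Set.Finite.pi fun _ => Set.toFinite _

theorem one_le_sum_sq_sub_of_ne [Fintype ι] {x y : ι → ℝ} (hx : IsBinary x) (hy : IsBinary y)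
    (hne : x ≠ y) : 1 ≤ ∑ i, (x i - y i) ^ 2 := by
  obtain ⟨i, hi⟩ := Function.ne_iff.mp hne
  have hsq : (x i - y i) ^ 2 = 1 := by
    rcases hx i with h | h <;> rcases hy i with h' | h' <;> simp_all
  calc (1 : ℝ) = (x i - y i) ^ 2 := hsq.symm
    _ ≤ ∑ j, (x j - y j) ^ 2 := single_le_sum (fun j _ => sq_nonneg (x j - y j)) (mem_univ i)

end Binary

section Bounds

variable {ι : Type*} [Fintype ι] {x y : ι → ℝ}

theorem abs_bilinear_le (Q : ι → ι → ℝ) (hx : ∀ i, |x i| ≤ 1) (hy : ∀ j, |y j| ≤ 1) :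
    |∑ i, ∑ j, Q i j * x i * y j| ≤ ∑ i, ∑ j, |Q i j| :=
  calc |∑ i, ∑ j, Q i j * x i * y j| ≤ ∑ i, ∑ j, |Q i j * x i * y j| :=
        (abs_sum_le_sum_abs _ _).trans (sum_le_sum fun _ _ => abs_sum_le_sum_abs _ _)
    _ ≤ ∑ i, ∑ j, |Q i j| := by
        refine sum_le_sum fun i _ => sum_le_sum fun j _ => ?_
        rw [abs_mul, abs_mul, mul_assoc]
        exact mul_le_of_le_one_right (abs_nonneg _) (mul_le_one₀ (hx i) (abs_nonneg _) (hy j))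

theorem abs_sum_mul_midpoint_le (c : ι → ℝ) (hx : ∀ i, |x i| ≤ 1) (hy : ∀ i, |y i| ≤ 1) :
    |∑ i, c i * (x i + y i) / 2| ≤ ∑ i, |c i| :=
  calc |∑ i, c i * (x i + y i) / 2| ≤ ∑ i, |c i * (x i + y i) / 2| := abs_sum_le_sum_abs _ _
    _ ≤ ∑ i, |c i| := by
        refine sum_le_sum fun i _ => ?_
        have hxy : |x i + y i| ≤ 2 := (abs_add_le _ _).trans (by linarith [hx i, hy i])
        rw [abs_div, abs_mul, abs_two, div_le_iff₀ two_pos]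
        exact mul_le_mul_of_nonneg_left hxy (abs_nonneg _)

end Bounds

section Penalty

variable {n : ℕ} (Q' : Matrix (Fin n) (Fin n) ℝ) (c' : Fin n → ℝ) (M : ℝ) {x y : Fin n → ℝ}

theorem penObj_eq_sub_penalty (hx : IsBinary x) (hy : IsBinary y) :
    penObj Q' c' M x y =
      (∑ i, ∑ j, Q' i j * x i * y j) + (∑ i, c' i * (x i + y i) / 2)
        - M * ∑ i, (x i - y i) ^ 2 := by
  have hdiag : ∀ i, ∑ j, (Q' i j + 2 * M * (if i = j then 1 else 0)) * x i * y j
      = (∑ j, Q' i j * x i * y j) + 2 * M * x i * y i := by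
    intro i
    simp only [add_mul, mul_ite, mul_one, mul_zero, ite_mul, zero_mul, sum_add_distrib,
      sum_ite_eq, mem_univ, if_true]
  have hpenalty : (∑ i, 2 * M * x i * y i) + (∑ i, ((1 / 2) * c' i - M) * x i)
      + (∑ i, ((1 / 2) * c' i - M) * y i)
        = (∑ i, c' i * (x i + y i) / 2) - M * ∑ i, (x i - y i) ^ 2 := by
    rw [← sum_add_distrib, ← sum_add_distrib, mul_sum, ← sum_sub_distrib]
    exact sum_congr rfl fun i _ => by linear_combination M * (hx.sq_eq i + hy.sq_eq i)
  unfold penObj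
  simp only [hdiag, sum_add_distrib]
  linear_combination hpenalty

theorem penObj_self (hx : IsBinary x) :
    penObj Q' c' M x x = (∑ i, ∑ j, Q' i j * x i * x j) + ∑ i, c' i * x i := by
  simp [penObj_eq_sub_penalty Q' c' M hx hx, add_self_div_two, mul_add]

theorem penObj_lt_penObj_self (hM : 2 * ((∑ i, ∑ j, |Q' i j|) + ∑ i, |c' i|) < M)
    (hx : IsBinary x) (hy : IsBinary y) (hne : x ≠ y) :
    penObj Q' c' M x y < penObj Q' c' M x x := by
  have hxy := abs_le.mp (abs_bilinear_le Q' hx.abs_le_one hy.abs_le_one)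
  have hxx := abs_le.mp (abs_bilinear_le Q' hx.abs_le_one hx.abs_le_one)
  have hcxy := abs_le.mp (abs_sum_mul_midpoint_le c' hx.abs_le_one hy.abs_le_one)
  have hcxx := abs_le.mp (abs_sum_mul_midpoint_le c' hx.abs_le_one hx.abs_le_one)
  have hM0 : 0 ≤ M := by
    have : 0 ≤ (∑ i, ∑ j, |Q' i j|) + ∑ i, |c' i| := by positivity
    linarith
  have hpen := mul_le_mul_of_nonneg_left (one_le_sum_sq_sub_of_ne hx hy hne) hM0
  rw [penObj_eq_sub_penalty Q' c' M hx hy, penObj_eq_sub_penalty Q' c' M hx hx]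
  simp only [sub_self, zero_pow two_ne_zero, sum_const_zero, mul_zero]
  linarith

theorem penObj_le_penObj_self (hM : 2 * ((∑ i, ∑ j, |Q' i j|) + ∑ i, |c' i|) < M)
    (hx : IsBinary x) (hy : IsBinary y) : penObj Q' c' M x y ≤ penObj Q' c' M x x := by
  rcases eq_or_ne x y with rfl | hne
  · exact le_rfl
  · exact (penObj_lt_penObj_self Q' c' M hM hx hy hne).le

end Penalty

/-- Penalty reduction of QP01 to BQP01: if `M > 2(Σ|q'_{ij}| + Σ|c'_i|)` then the
maximum over binary `x, y` of the penalized bipartite objective equals the maximum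
over binary `x` of `xᵀQ'x + c'·x`, and every maximizing pair `(x,y)` of the former
has `x = y`. -/
theorem stmt_11 (n : ℕ) (Q' : Matrix (Fin n) (Fin n) ℝ) (c' : Fin n → ℝ) (M : ℝ)
    (hM : 2 * ((∑ i, ∑ j, |Q' i j|) + ∑ i, |c' i|) < M) :
    (sSup {v : ℝ | ∃ x y : Fin n → ℝ,
        (∀ i, x i = 0 ∨ x i = 1) ∧ (∀ i, y i = 0 ∨ y i = 1) ∧ v = penObj Q' c' M x y} =
      sSup {v : ℝ | ∃ x : Fin n → ℝ, (∀ i, x i = 0 ∨ x i = 1) ∧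
        v = (∑ i, ∑ j, Q' i j * x i * x j) + ∑ i, c' i * x i}) ∧
    (∀ x y : Fin n → ℝ,
      (∀ i, x i = 0 ∨ x i = 1) → (∀ i, y i = 0 ∨ y i = 1) →
      (∀ x' y' : Fin n → ℝ,
        (∀ i, x' i = 0 ∨ x' i = 1) → (∀ i, y' i = 0 ∨ y' i = 1) →
        penObj Q' c' M x' y' ≤ penObj Q' c' M x y) →
      x = y) := by
  have hzero : IsBinary (0 : Fin n → ℝ) := fun _ => Or.inl rfl
  have hfin := finite_setOf_isBinary (ι := Fin n)
  refine ⟨le_antisymm ?_ ?_, fun x y hx hy hmax => ?_⟩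
  · have hbdd : BddAbove {v : ℝ | ∃ x : Fin n → ℝ, (∀ i, x i = 0 ∨ x i = 1) ∧
        v = (∑ i, ∑ j, Q' i j * x i * x j) + ∑ i, c' i * x i} :=
      (hfin.image _).bddAbove.mono <| by rintro _ ⟨x, hx, rfl⟩; exact ⟨x, hx, rfl⟩
    refine csSup_le ⟨_, 0, 0, hzero, hzero, rfl⟩ ?_
    rintro v ⟨x, y, hx, hy, rfl⟩
    calc penObj Q' c' M x y ≤ penObj Q' c' M x x := penObj_le_penObj_self Q' c' M hM hx hy
      _ = _ := penObj_self Q' c' M hx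
      _ ≤ _ := le_csSup hbdd ⟨x, hx, rfl⟩
  · refine csSup_le_csSup ?_ ⟨_, 0, hzero, rfl⟩ ?_
    · refine (hfin.image2 (penObj Q' c' M) hfin).bddAbove.mono ?_
      rintro _ ⟨x, y, hx, hy, rfl⟩
      exact ⟨x, hx, y, hy, rfl⟩
    · rintro v ⟨x, hx, rfl⟩
      exact ⟨x, x, hx, hx, (penObj_self Q' c' M hx).symm⟩
  · by_contra hne
    exact (hmax x x hx hx).not_gt (penObj_lt_penObj_self Q' c' M hM hx hy hne)
end
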